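/- arXiv:1404.1440 — 3 statements merged into one kernel-verified Lean document; each statement's English description precedes it below -/
import Mathlib

section
/- For any two real symmetric m×m matrices A and B, the squared Frobenius norm of their commutator satisfies ‖[A,B]‖² ≤ 2‖A‖²·‖B‖². -/
open Matrix Finset

/-- Frobenius norm squared of a real matrix. -/
def frob2 {m : ℕ} (M : Matrix (Fin m) (Fin m) ℝ) : ℝ :=
  ∑ i, ∑ j, (M i j) ^ 2

/-! Diagonalise `A` by an orthogonal conjugation, which preserves the Frobenius norm. If
`A = diag(d)`, the `(i, j)` entry of `[A, B]` is `(d i - d j) * B i j`, and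
`(d i - d j)² ≤ 2 (d i² + d j²) ≤ 2 ‖A‖²`. -/

theorem sq_sub_le_two_mul_sum_sq {ι : Type*} [Fintype ι] (d : ι → ℝ) (i j : ι) :
    (d i - d j) ^ 2 ≤ 2 * ∑ k, d k ^ 2 := by
  classical
  have hsum_nonneg : 0 ≤ ∑ k, d k ^ 2 := sum_nonneg fun k _ => sq_nonneg (d k)
  by_cases hij : i = j
  · simp [hij, hsum_nonneg]
  · have hpair : d i ^ 2 + d j ^ 2 ≤ ∑ k, d k ^ 2 := by
      rw [← sum_pair (f := fun k => d k ^ 2) hij]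
      exact sum_le_univ_sum_of_nonneg fun k => sq_nonneg (d k)
    nlinarith [sq_nonneg (d i + d j)]

section

variable {m : ℕ}

theorem frob2_eq_trace_mul_conjTranspose (M : Matrix (Fin m) (Fin m) ℝ) :
    frob2 M = trace (M * Mᴴ) := by
  simp [frob2, trace, mul_apply, sq]

theorem frob2_conjStarAlgAut (U : unitaryGroup (Fin m) ℝ) (M : Matrix (Fin m) (Fin m) ℝ) :
    frob2 (Unitary.conjStarAlgAut ℝ _ U M) = frob2 M := by
  rw [Unitary.conjStarAlgAut_apply]
  set V : Matrix (Fin m) (Fin m) ℝ := ↑U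
  have hV : star V * V = 1 := Unitary.coe_star_mul_self U
  rw [frob2_eq_trace_mul_conjTranspose, frob2_eq_trace_mul_conjTranspose,
    ← star_eq_conjTranspose, star_mul, star_mul, star_star, ← star_eq_conjTranspose]
  calc trace (V * M * star V * (V * (Mᴴ * star V)))
      = trace (V * (M * (star V * V) * Mᴴ) * star V) := by simp only [Matrix.mul_assoc]
    _ = trace (M * Mᴴ) := by
        rw [hV, Matrix.mul_one, trace_mul_cycle, ← Matrix.mul_assoc, hV, Matrix.one_mul]

theorem frob2_diagonal (d : Fin m → ℝ) : frob2 (diagonal d) = ∑ i, d i ^ 2 := by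
  refine sum_congr rfl fun i _ => ?_
  rw [sum_eq_single i (fun j _ hji => by simp [diagonal_apply_ne _ hji.symm]) (by simp)]
  simp

theorem frob2_diagonal_commutator (d : Fin m → ℝ) (B : Matrix (Fin m) (Fin m) ℝ) :
    frob2 (diagonal d * B - B * diagonal d)
      = ∑ i, ∑ j, (d i - d j) ^ 2 * B i j ^ 2 := by
  refine sum_congr rfl fun i _ => sum_congr rfl fun j _ => ?_
  rw [Matrix.sub_apply, diagonal_mul, mul_diagonal]
  ring

theorem frob2_diagonal_commutator_le (d : Fin m → ℝ) (B : Matrix (Fin m) (Fin m) ℝ) :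
    frob2 (diagonal d * B - B * diagonal d)
      ≤ 2 * frob2 (diagonal d) * frob2 B := by
  rw [frob2_diagonal_commutator, frob2_diagonal, frob2, mul_sum]
  refine sum_le_sum fun i _ => ?_
  rw [mul_sum]
  exact sum_le_sum fun j _ =>
    mul_le_mul_of_nonneg_right (sq_sub_le_two_mul_sum_sq d i j) (sq_nonneg _)

end

theorem commutator_frob_le_general {m : ℕ} (A B : Matrix (Fin m) (Fin m) ℝ)
    (hA : A.IsSymm) :
    frob2 (A * B - B * A) ≤ 2 * frob2 A * frob2 B := by
  have hAh : A.IsHermitian := isHermitian_iff_isSymm.mpr hA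
  set f := Unitary.conjStarAlgAut ℝ (Matrix (Fin m) (Fin m) ℝ) hAh.eigenvectorUnitary
  set D := diagonal (RCLike.ofReal ∘ hAh.eigenvalues : Fin m → ℝ)
  set B' := f.symm B
  have hA_eq : A = f D := hAh.spectral_theorem
  have hB_eq : B = f B' := (f.apply_symm_apply B).symm
  have hcomm : A * B - B * A = f (D * B' - B' * D) := by
    rw [map_sub, map_mul, map_mul, ← hA_eq, ← hB_eq]
  calc frob2 (A * B - B * A) = frob2 (D * B' - B' * D) := by
        rw [hcomm, frob2_conjStarAlgAut]
    _ ≤ 2 * frob2 D * frob2 B' := frob2_diagonal_commutator_le _ B'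
    _ = 2 * frob2 A * frob2 B := by
        rw [hA_eq, hB_eq, frob2_conjStarAlgAut, frob2_conjStarAlgAut]

/-- For real symmetric matrices, ‖[A,B]‖² ≤ 2‖A‖²‖B‖² (Frobenius norm). -/
theorem commutator_frob_le {m : ℕ} (A B : Matrix (Fin m) (Fin m) ℝ)
    (hA : A.IsSymm) (hB : B.IsSymm) :
    frob2 (A * B - B * A) ≤ 2 * frob2 A * frob2 B :=
  commutator_frob_le_general A B hA
end

section
/- Let m ≥ 2, and let A₁ = λ₁I + μ₀(E₁₂+E₂₁), A₂ = λ₂I + μ₀(E₁₁−E₂₂), A₃ = λ₃I, A₄ = … = A_p = 0 be m×m matrices. Let Bᵣ = Aᵣ − (trace(Aᵣ)/m)I denote their traceless parts. Then (Σᵣ ‖Bᵣ‖²)² = 2 Σ_{r<s} ‖[Bᵣ,Bₛ]‖² = 16μ₀⁴; i.e., shape operators in the Wintgen canonical form attain equality in the matrix DDVV inequality. -/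
/-!
Removing the trace part kills every `λᵣ`: `B₁ = μ₀(E₁₂ + E₂₁)`, `B₂ = μ₀(E₁₁ - E₂₂)` and
all other `Bᵣ` vanish. Hence `Σ ‖Bᵣ‖² = 4μ₀²`, and the only nonzero commutator is
`[B₁, B₂] = 2μ₀²(E₂₁ - E₁₂)`, with `‖[B₁, B₂]‖² = 8μ₀⁴`.
-/

open Matrix Finset

def i0 (m : ℕ) (hm : 2 ≤ m) : Fin m := ⟨0, by omega⟩
def i1 (m : ℕ) (hm : 2 ≤ m) : Fin m := ⟨1, by omega⟩

theorem sub_trace_div_card_smul_one_eq {n K : Type*} [Fintype n] [DecidableEq n] [Nonempty n]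
    [Field K] [CharZero K] (c : K) {N : Matrix n n K} (hN : N.trace = 0) :
    c • 1 + N - ((c • 1 + N).trace / Fintype.card n) • (1 : Matrix n n K) = N := by
  have hcard : (Fintype.card n : K) ≠ 0 := Nat.cast_ne_zero.2 Fintype.card_ne_zero
  rw [trace_add, trace_smul, trace_one, hN, add_zero, smul_eq_mul, mul_div_cancel_right₀ _ hcard,
    add_sub_cancel_left]

theorem commutator_single_add_single_single_add_single {n K : Type*} [Fintype n] [DecidableEq n]
    [CommRing K] {i j : n} (hij : i ≠ j) (c : K) :
    (single i j c + single j i c) * (single i i c + single j j (-c))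
      - (single i i c + single j j (-c)) * (single i j c + single j i c)
      = single j i (2 * c ^ 2) + single i j (-(2 * c ^ 2)) := by
  simp only [add_mul, mul_add, single_mul_single_same, single_mul_single_of_ne _ _ _ _ hij,
    single_mul_single_of_ne _ _ _ _ hij.symm, add_zero, zero_add]
  ext x y
  simp only [Matrix.sub_apply, Matrix.add_apply, single_apply]
  split_ifs <;> ring

theorem frob2_single_add_single {m : ℕ} {i j k l : Fin m} (h : (i, j) ≠ (k, l)) (a b : ℝ) :
    frob2 (single i j a + single k l b) = a ^ 2 + b ^ 2 := by
  have hentry : ∀ x y, ((single i j a + single k l b : Matrix (Fin m) (Fin m) ℝ) x y) ^ 2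
      = (if i = x ∧ j = y then a ^ 2 else 0) + (if k = x ∧ l = y then b ^ 2 else 0) := by
    intro x y
    simp only [Matrix.add_apply, single_apply]
    split_ifs <;> simp_all
  simp only [frob2, hentry, sum_add_distrib, ite_and, sum_ite_irrel, sum_ite_eq, mem_univ,
    if_true, sum_const_zero]

@[simp]
theorem frob2_zero {m : ℕ} : frob2 (0 : Matrix (Fin m) (Fin m) ℝ) = 0 := by
  simp [frob2]

theorem sum_frob2_commutator_of_eq_zero {ι : Type*} [Fintype ι] [LinearOrder ι] {m : ℕ}
    {B : ι → Matrix (Fin m) (Fin m) ℝ} {a b : ι} (hab : a < b)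
    (hB : ∀ r, r ≠ a → r ≠ b → B r = 0) :
    ∑ r, ∑ s, (if r < s then frob2 (B r * B s - B s * B r) else 0)
      = frob2 (B a * B b - B b * B a) := by
  rw [Fintype.sum_eq_add a b hab.ne, Fintype.sum_eq_single b, if_pos hab,
    Fintype.sum_eq_zero _ fun s => ?_, add_zero]
  · split_ifs with hbs
    · simp [hB s (hab.trans hbs).ne' hbs.ne']
    · rfl
  · intro s hsb
    split_ifs with has
    · simp [hB s has.ne' hsb]
    · rfl
  · rintro r ⟨hra, hrb⟩
    exact Fintype.sum_eq_zero _ fun s => by simp [hB r hra hrb]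

/-- Shape operators in the Wintgen canonical form attain equality in the
matrix DDVV inequality: with Bᵣ the traceless part of Aᵣ,
(Σᵣ ‖Bᵣ‖²)² = 2 Σ_{r<s} ‖[Bᵣ,Bₛ]‖² = 16μ₀⁴. -/
theorem wintgen_ddvv_equality (m p : ℕ) (hm : 2 ≤ m) (hp : 3 ≤ p)
    (lam1 lam2 lam3 mu0 : ℝ) (A : Fin p → Matrix (Fin m) (Fin m) ℝ)
    (hA1 : A ⟨0, by omega⟩ = lam1 • (1 : Matrix (Fin m) (Fin m) ℝ)
              + mu0 • (Matrix.single (i0 m hm) (i1 m hm) 1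
                       + Matrix.single (i1 m hm) (i0 m hm) 1))
    (hA2 : A ⟨1, by omega⟩ = lam2 • (1 : Matrix (Fin m) (Fin m) ℝ)
              + mu0 • (Matrix.single (i0 m hm) (i0 m hm) 1
                       - Matrix.single (i1 m hm) (i1 m hm) 1))
    (hA3 : A ⟨2, by omega⟩ = lam3 • (1 : Matrix (Fin m) (Fin m) ℝ))
    (hA : ∀ r : Fin p, 3 ≤ (r : ℕ) → A r = 0)
    (B : Fin p → Matrix (Fin m) (Fin m) ℝ)
    (hB : ∀ r, B r = A r - ((A r).trace / m) • (1 : Matrix (Fin m) (Fin m) ℝ)) :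
    (∑ r, frob2 (B r)) ^ 2
        = 2 * ∑ r, ∑ s, (if r < s then frob2 (B r * B s - B s * B r) else 0) ∧
    (∑ r, frob2 (B r)) ^ 2 = 16 * mu0 ^ 4 := by
  have : Nonempty (Fin m) := ⟨i0 m hm⟩
  have hne : i0 m hm ≠ i1 m hm := by simp [i0, i1, Fin.ext_iff]
  have traceless : ∀ r (c : ℝ) N, A r = c • 1 + N → N.trace = 0 → B r = N := by
    intro r c N hAr hN
    have := sub_trace_div_card_smul_one_eq c hN
    rwa [Fintype.card_fin, ← hAr, ← hB] at this
  have hB0 : B ⟨0, by omega⟩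
      = single (i0 m hm) (i1 m hm) mu0 + single (i1 m hm) (i0 m hm) mu0 := by
    rw [traceless _ _ _ hA1 (by simp [trace_single_eq_of_ne _ _ _ hne,
      trace_single_eq_of_ne _ _ _ hne.symm]), smul_add, smul_single, smul_single, smul_eq_mul,
      mul_one]
  have hB1 : B ⟨1, by omega⟩
      = single (i0 m hm) (i0 m hm) mu0 + single (i1 m hm) (i1 m hm) (-mu0) := by
    rw [traceless _ _ _ hA2 (by simp), smul_sub, smul_single, smul_single, smul_eq_mul, mul_one,
      sub_eq_add_neg, single_neg]
  have hBrest : ∀ r : Fin p, r ≠ ⟨0, by omega⟩ → r ≠ ⟨1, by omega⟩ → B r = 0 := by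
    intro r hr0 hr1
    rcases eq_or_ne r ⟨2, by omega⟩ with rfl | hr2
    · exact traceless _ lam3 0 (by rw [hA3, add_zero]) (trace_zero _ _)
    · have h3 : 3 ≤ (r : ℕ) := by
        simp only [ne_eq, Fin.ext_iff] at hr0 hr1 hr2
        omega
      exact traceless _ 0 0 (by rw [hA r h3, zero_smul, add_zero]) (trace_zero _ _)
  have hnorm : ∑ r, frob2 (B r) = 4 * mu0 ^ 2 := by
    rw [Fintype.sum_eq_add ⟨0, by omega⟩ ⟨1, by omega⟩ (by simp [Fin.ext_iff])
      fun r hr => by rw [hBrest r hr.1 hr.2, frob2_zero], hB0, hB1,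
      frob2_single_add_single (by simp [hne]), frob2_single_add_single (by simp [hne])]
    ring
  have hcomm :
      ∑ r, ∑ s, (if r < s then frob2 (B r * B s - B s * B r) else 0) = 8 * mu0 ^ 4 := by
    rw [sum_frob2_commutator_of_eq_zero (by simp [Fin.lt_def]) hBrest, hB0, hB1,
      commutator_single_add_single_single_add_single hne,
      frob2_single_add_single (by simp [hne.symm])]
    ring
  rw [hnorm, hcomm]
  constructor <;> ring
end

section
/- Let m ≥ 2, c ∈ ℝ, and let A₁ = λ₁I + μ₀(E₁₂+E₂₁), A₂ = λ₂I + μ₀(E₁₁−E₂₂), A₃ = λ₃I be m×m shape operators. Define the normalized scalar curvature K := c + (2/(m(m−1))) Σᵣ Σ_{i<j} ((Aᵣ)ᵢᵢ(Aᵣ)ⱼⱼ − (Aᵣ)ᵢⱼ²), the squared mean curvature ‖H‖² := λ₁² + λ₂² + λ₃², and the normal scalar curvature K_N := (2/(m(m−1))) · √(Σ_{i<j} Σ_{r<s} ([Aᵣ,Aₛ]ᵢⱼ)²). Then K = c + ‖H‖² − K_N; i.e., the DDVV equality holds pointwise. -/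
/-!
For a symmetric matrix `A` one has `2 ∑_{i<j} (Aᵢᵢ Aⱼⱼ - Aᵢⱼ²) = (tr A)² - tr (A²)`. Writing each
shape operator as `λ • 1 + μ₀ • P` with `P` symmetric and traceless, the scalar part contributes
`m (m - 1) λ²` and the Wintgen blocks, both squaring to `E₁₁ + E₂₂`, subtract `2 μ₀²` each.
The scalar parts drop out of the commutators, so the only one left is
`[A₁, A₂] = 2 μ₀² (E₂₁ - E₁₂)`, whose single strictly upper entry gives `K_N = 4 μ₀² / (m (m - 1))`.
-/

open Matrix Finset

/-- Gauss-equation contribution of a single shape operator: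
Σ_{i<j} (Aᵢᵢ Aⱼⱼ − Aᵢⱼ²). -/
def gaussContrib {m : ℕ} (A : Matrix (Fin m) (Fin m) ℝ) : ℝ :=
  ∑ i, ∑ j, (if i < j then A i i * A j j - (A i j) ^ 2 else 0)

section UpperTriangle

variable {ι R : Type*} [Fintype ι] [LinearOrder ι]

theorem sum_sum_eq_sum_diag_add_two_mul_sum_lt [CommSemiring R] (f : ι → ι → R)
    (hf : ∀ i j, f i j = f j i) :
    ∑ i, ∑ j, f i j = ∑ i, f i i + 2 * ∑ i, ∑ j, if i < j then f i j else 0 := by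
  have hsplit : ∀ i j, f i j = (if i = j then f i j else 0) + (if i < j then f i j else 0)
      + (if j < i then f i j else 0) := by
    intro i j
    rcases lt_trichotomy i j with h | rfl | h
    · simp [h, h.ne, h.not_gt]
    · simp
    · simp [h, h.ne', h.not_gt]
  have hlower : ∑ i, ∑ j, (if j < i then f i j else 0) = ∑ i, ∑ j, if i < j then f i j else 0 := by
    rw [Finset.sum_comm]
    simp_rw [hf]
  calc ∑ i, ∑ j, f i j
      = ∑ i, ∑ j, ((if i = j then f i j else 0) + (if i < j then f i j else 0)
          + (if j < i then f i j else 0)) :=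
        Finset.sum_congr rfl fun i _ => Finset.sum_congr rfl fun j _ => hsplit i j
    _ = ∑ i, f i i + 2 * ∑ i, ∑ j, if i < j then f i j else 0 := by
        simp only [Finset.sum_add_distrib, hlower, Finset.sum_ite_eq, Finset.mem_univ, if_true]
        ring

theorem sum_sum_ite_lt_eq_of_eq_zero [AddCommMonoid R] {a b : ι} (hab : a < b)
    (f : ι → ι → R) (hf : ∀ i j, i < j → (i, j) ≠ (a, b) → f i j = 0) :
    ∑ i, ∑ j, (if i < j then f i j else 0) = f a b := by
  rw [Finset.sum_eq_single a, Finset.sum_eq_single b, if_pos hab]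
  · intro j _ hj
    split_ifs with h
    · exact hf a j h (by simp [hj])
    · rfl
  · simp
  · intro i _ hi
    refine Finset.sum_eq_zero fun j _ => ?_
    split_ifs with h
    · exact hf i j h (by simp [hi])
    · rfl
  · simp

theorem sum_sum_ite_lt_sq_smul_single_sub_single [CommRing R] {a b : ι} (hab : a < b) (r : R) :
    ∑ i, ∑ j, (if i < j then ((r • (single b a 1 - single a b 1) : Matrix ι ι R) i j) ^ 2 else 0)
      = r ^ 2 := by
  rw [sum_sum_ite_lt_eq_of_eq_zero hab]
  · simp [hab.ne, hab.ne']
  · intro i j hij hij'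
    have hlower : ¬(b = i ∧ a = j) := fun ⟨hi, hj⟩ => (hi ▸ hj ▸ hij).asymm hab
    have hupper : ¬(a = i ∧ b = j) := fun ⟨hi, hj⟩ => hij' (hi ▸ hj ▸ rfl)
    simp [hlower, hupper]

end UpperTriangle

section WintgenBlocks

variable {n R : Type*} [Fintype n] [DecidableEq n] [CommRing R] {a b : n}

theorem commutator_smul_one_add_smul {A : Type*} [Ring A] [Algebra R A] (x y μ : R) (P Q : A) :
    (x • 1 + μ • P) * (y • 1 + μ • Q) - (y • 1 + μ • Q) * (x • 1 + μ • P)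
      = (μ * μ) • (P * Q - Q * P) := by
  simp only [add_mul, mul_add, smul_mul_assoc, mul_smul_comm, mul_one, one_mul]
  module

theorem mul_smul_one_sub_smul_one_mul {A : Type*} [Ring A] [Algebra R A] (x : R) (B : A) :
    B * (x • 1) - (x • 1) * B = 0 := by
  rw [mul_smul_one, smul_one_mul, sub_self]

omit [Fintype n] in
theorem isSymm_single_add_single_swap (a b : n) (r : R) :
    (single a b r + single b a r).IsSymm := by
  simp [IsSymm, transpose_single, add_comm]

omit [Fintype n] in
theorem isSymm_single_sub_single (a b : n) (r : R) : (single a a r - single b b r).IsSymm := by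
  simp [IsSymm, transpose_single]

theorem trace_single_add_single_swap (hab : a ≠ b) (r : R) :
    (single a b r + single b a r).trace = 0 := by
  simp [hab, hab.symm]

theorem trace_single_sub_single (a b : n) (r : R) : (single a a r - single b b r).trace = 0 := by
  simp

theorem single_add_single_swap_mul_self (hab : a ≠ b) :
    (single a b (1 : R) + single b a 1) * (single a b 1 + single b a 1)
      = single a a 1 + single b b 1 := by
  simp [add_mul, mul_add, hab, hab.symm, add_comm]

theorem single_sub_single_mul_self (hab : a ≠ b) :
    (single a a (1 : R) - single b b 1) * (single a a 1 - single b b 1)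
      = single a a 1 + single b b 1 := by
  simp [sub_mul, mul_sub, hab, hab.symm]

theorem trace_single_add_single_same (a b : n) :
    (single a a (1 : R) + single b b 1).trace = 2 := by
  simp [one_add_one_eq_two]

theorem single_add_single_swap_commutator_single_sub_single (hab : a ≠ b) :
    (single a b (1 : R) + single b a 1) * (single a a 1 - single b b 1)
      - (single a a 1 - single b b 1) * (single a b 1 + single b a 1)
      = (2 : R) • (single b a 1 - single a b 1) := by
  simp [add_mul, mul_add, sub_mul, mul_sub, hab, hab.symm]
  module

end WintgenBlocks

section Gauss

variable {m : ℕ}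

theorem two_mul_gaussContrib {A : Matrix (Fin m) (Fin m) ℝ} (hA : A.IsSymm) :
    2 * gaussContrib A = A.trace ^ 2 - (A * A).trace := by
  have htr_sq : A.trace ^ 2 =
      ∑ i, A i i * A i i + 2 * ∑ i, ∑ j, if i < j then A i i * A j j else 0 := by
    rw [← sum_sum_eq_sum_diag_add_two_mul_sum_lt (fun i j => A i i * A j j)
      fun i j => mul_comm _ _, trace, sq, Finset.sum_mul_sum]
    rfl
  have htr_mul_self : (A * A).trace =
      ∑ i, A i i * A i i + 2 * ∑ i, ∑ j, if i < j then A i j * A i j else 0 := by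
    have hsymm : ∀ i j, A j i = A i j := fun i j => hA.apply i j
    rw [← sum_sum_eq_sum_diag_add_two_mul_sum_lt (fun i j => A i j * A i j)
      fun i j => by rw [hsymm]]
    simp only [trace, diag_apply, mul_apply, hsymm]
  have hsplit : gaussContrib A = (∑ i, ∑ j, if i < j then A i i * A j j else 0)
      - ∑ i, ∑ j, if i < j then A i j * A i j else 0 := by
    simp only [gaussContrib, ← Finset.sum_sub_distrib, sq]
    congr! 2
    split_ifs <;> simp
  rw [htr_sq, htr_mul_self, hsplit]
  ring

theorem two_mul_gaussContrib_smul_one_add_smul (x μ : ℝ) {P : Matrix (Fin m) (Fin m) ℝ}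
    (hP : P.IsSymm) (htr : P.trace = 0) :
    2 * gaussContrib (x • 1 + μ • P) = m * (m - 1) * x ^ 2 - μ ^ 2 * (P * P).trace := by
  rw [two_mul_gaussContrib ((isSymm_one.smul x).add (hP.smul μ))]
  simp only [add_mul, mul_add, smul_mul_assoc, mul_smul_comm, mul_one, one_mul,
    trace_add, trace_smul, trace_one, htr, Fintype.card_fin, smul_eq_mul]
  ring

theorem two_mul_gaussContrib_smul_one (x : ℝ) :
    2 * gaussContrib (x • 1 : Matrix (Fin m) (Fin m) ℝ) = m * (m - 1) * x ^ 2 := by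
  simpa using two_mul_gaussContrib_smul_one_add_smul (m := m) x 0 isSymm_zero (trace_zero _ _)

theorem two_mul_gaussContrib_smul_one_add_smul_single_add_single_swap {a b : Fin m} (hab : a ≠ b)
    (x μ : ℝ) :
    2 * gaussContrib (x • 1 + μ • (single a b 1 + single b a 1))
      = m * (m - 1) * x ^ 2 - 2 * μ ^ 2 := by
  rw [two_mul_gaussContrib_smul_one_add_smul _ _ (isSymm_single_add_single_swap _ _ _)
    (trace_single_add_single_swap hab _), single_add_single_swap_mul_self hab,
    trace_single_add_single_same]
  ring

theorem two_mul_gaussContrib_smul_one_add_smul_single_sub_single {a b : Fin m} (hab : a ≠ b)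
    (x μ : ℝ) :
    2 * gaussContrib (x • 1 + μ • (single a a 1 - single b b 1))
      = m * (m - 1) * x ^ 2 - 2 * μ ^ 2 := by
  rw [two_mul_gaussContrib_smul_one_add_smul _ _ (isSymm_single_sub_single _ _ _)
    (trace_single_sub_single _ _ _), single_sub_single_mul_self hab,
    trace_single_add_single_same]
  ring

end Gauss

/-- For shape operators in the Wintgen canonical form, the DDVV equality
K = c + ‖H‖² − K_N holds pointwise. -/
theorem wintgen_ddvv_pointwise_equality (m : ℕ) (hm : 2 ≤ m) (c : ℝ)
    (lam1 lam2 lam3 mu0 : ℝ) (A1 A2 A3 : Matrix (Fin m) (Fin m) ℝ)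
    (hA1 : A1 = lam1 • (1 : Matrix (Fin m) (Fin m) ℝ)
              + mu0 • (Matrix.single (i0 m hm) (i1 m hm) 1
                       + Matrix.single (i1 m hm) (i0 m hm) 1))
    (hA2 : A2 = lam2 • (1 : Matrix (Fin m) (Fin m) ℝ)
              + mu0 • (Matrix.single (i0 m hm) (i0 m hm) 1
                       - Matrix.single (i1 m hm) (i1 m hm) 1))
    (hA3 : A3 = lam3 • (1 : Matrix (Fin m) (Fin m) ℝ))
    (K H2 KN : ℝ)
    (hK : K = c + 2 / ((m : ℝ) * ((m : ℝ) - 1))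
                * (gaussContrib A1 + gaussContrib A2 + gaussContrib A3))
    (hH2 : H2 = lam1 ^ 2 + lam2 ^ 2 + lam3 ^ 2)
    (hKN : KN = 2 / ((m : ℝ) * ((m : ℝ) - 1))
              * Real.sqrt (∑ i, ∑ j, (if i < j then
                  ((A1 * A2 - A2 * A1) i j) ^ 2
                  + ((A1 * A3 - A3 * A1) i j) ^ 2
                  + ((A2 * A3 - A3 * A2) i j) ^ 2 else 0))) :
    K = c + H2 - KN := by
  have hlt : i0 m hm < i1 m hm := by simp [i0, i1, Fin.lt_def]
  have hGauss : 2 * (gaussContrib A1 + gaussContrib A2 + gaussContrib A3)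
      = m * (m - 1) * (lam1 ^ 2 + lam2 ^ 2 + lam3 ^ 2) - 4 * mu0 ^ 2 := by
    rw [mul_add, mul_add, hA1, hA2, hA3,
      two_mul_gaussContrib_smul_one_add_smul_single_add_single_swap hlt.ne,
      two_mul_gaussContrib_smul_one_add_smul_single_sub_single hlt.ne,
      two_mul_gaussContrib_smul_one]
    ring
  have hC12 : A1 * A2 - A2 * A1
      = (2 * mu0 ^ 2) • (single (i1 m hm) (i0 m hm) 1 - single (i0 m hm) (i1 m hm) 1) := by
    rw [hA1, hA2, commutator_smul_one_add_smul,
      single_add_single_swap_commutator_single_sub_single hlt.ne, smul_smul]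
    congr 1
    ring
  have hN : Real.sqrt (∑ i, ∑ j, (if i < j then
      ((A1 * A2 - A2 * A1) i j) ^ 2 + ((A1 * A3 - A3 * A1) i j) ^ 2
        + ((A2 * A3 - A3 * A2) i j) ^ 2 else 0)) = 2 * mu0 ^ 2 := by
    simp only [hC12, hA3, mul_smul_one_sub_smul_one_mul, Matrix.zero_apply, ne_eq,
      OfNat.ofNat_ne_zero, not_false_eq_true, zero_pow, add_zero]
    rw [sum_sum_ite_lt_sq_smul_single_sub_single hlt, Real.sqrt_sq (by positivity)]
  have hm0 : (m : ℝ) ≠ 0 := by positivity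
  have hm1 : (m : ℝ) - 1 ≠ 0 := sub_ne_zero.2 (by exact_mod_cast (by omega : m ≠ 1))
  rw [hK, hKN, hH2, hN]
  field_simp
  linear_combination hGauss
end
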